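/- arXiv:1209.5360 — 4 statements merged into one kernel-verified Lean document; each statement's English description precedes it below -/
import Mathlib

section
/- If x and y are vectors of nonnegative integers of length n, each sorted in non-increasing order, such that x majorizes y, and e_i denotes the i-th unit vector, then for any indices i ≤ j, the vector obtained by sorting x + e_i in non-increasing order majorizes the vector obtained by sorting y + e_j in non-increasing order. -/
/-- Sum of the first `k` entries of a vector indexed by `Fin n`. -/
def prefixSum (n : ℕ) (v : Fin n → ℕ) (k : ℕ) : ℕ :=
  ∑ i ∈ Finset.univ.filter (fun i : Fin n => (i : ℕ) < k), v i

/-- The `i`-th unit vector. -/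
def unitVec (n : ℕ) (i : Fin n) : Fin n → ℕ := fun k => if k = i then 1 else 0

/-- `x` majorizes `y`: equal total sums and dominating prefix sums. -/
def Majorizes (n : ℕ) (x y : Fin n → ℕ) : Prop :=
  (∑ i, x i = ∑ i, y i) ∧ ∀ k, k < n → prefixSum n y k ≤ prefixSum n x k

lemma prefixSum_succ (n : ℕ) (v : Fin n → ℕ) (k : ℕ) (h : k < n) :
    prefixSum n v (k + 1) = prefixSum n v k + v ⟨k, h⟩ := by
  unfold prefixSum
  rw [show (Finset.univ.filter (fun i : Fin n => (i : ℕ) < k + 1))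
      = insert (⟨k, h⟩ : Fin n) (Finset.univ.filter (fun i : Fin n => (i : ℕ) < k)) by
    ext t; simp [Fin.ext_iff]; omega]
  rw [Finset.sum_insert (by simp)]
  ring

lemma prefixSum_top (n : ℕ) (v : Fin n → ℕ) : prefixSum n v n = ∑ i, v i := by
  unfold prefixSum
  congr 1
  apply Finset.filter_true_of_mem
  intro i _
  exact i.isLt

lemma prefixSum_add_unit (n : ℕ) (v : Fin n → ℕ) (m : Fin n) (k : ℕ) :
    prefixSum n (v + unitVec n m) k
      = prefixSum n v k + (if (m : ℕ) < k then 1 else 0) := by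
  unfold prefixSum unitVec
  simp only [Pi.add_apply]
  rw [Finset.sum_add_distrib, Finset.sum_ite_eq']
  simp

lemma sum_add_unit (n : ℕ) (v : Fin n → ℕ) (m : Fin n) :
    ∑ t, (v + unitVec n m) t = (∑ t, v t) + 1 := by
  simp [unitVec, Finset.sum_add_distrib]

/-- The sorted version of `x + e_i` is `x + e_m` where `m` is the first index
with `x m = x i`. -/
lemma sorted_shift (n : ℕ) (x : Fin n → ℕ) (hx : Antitone x) (i : Fin n)
    (x' : Fin n → ℕ) (hx' : Antitone x') (σ : Equiv.Perm (Fin n))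
    (h : x' = (x + unitVec n i) ∘ σ) :
    ∃ m : Fin n, m ≤ i ∧ x m = x i ∧ (∀ t : Fin n, t < m → x i < x t) ∧
      x' = x + unitVec n m := by
  classical
  set S := Finset.univ.filter (fun t : Fin n => x t = x i) with hS
  have hiS : i ∈ S := by simp [hS]
  have hne : S.Nonempty := ⟨i, hiS⟩
  set m := S.min' hne with hm
  have hxm : x m = x i := by
    have := S.min'_mem hne
    simpa [hS] using this
  have hmi : m ≤ i := S.min'_le i hiS
  have hmin : ∀ t : Fin n, t < m → x i < x t := by
    intro t ht
    have h1 : x i ≤ x t := hxm ▸ hx ht.le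
    rcases eq_or_lt_of_le h1 with he | hlt
    · exfalso
      have : m ≤ t := S.min'_le t (by simp [hS, he.symm])
      exact absurd ht (not_lt.2 this)
    · exact hlt
  have hanti : Antitone (x + unitVec n m) := by
    intro a b hab
    have hxx : x b ≤ x a := hx hab
    simp only [Pi.add_apply, unitVec]
    rcases eq_or_ne b m with rfl | hbm
    · rcases eq_or_ne a m with rfl | ham
      · exact le_refl _
      · have halt : a < m := lt_of_le_of_ne hab ham
        have h2 : x i < x a := hmin a halt
        have h3 : x m < x a := by rw [hxm]; exact h2
        simp only [if_pos rfl, if_neg ham, if_true]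
        omega
    · rcases eq_or_ne a m with rfl | ham
      · simp only [if_neg hbm, if_pos rfl, if_true]; omega
      · simp only [if_neg hbm, if_neg ham]; omega
  have hswap : (x + unitVec n i) ∘ (Equiv.swap i m) = x + unitVec n m := by
    funext t
    simp only [Function.comp_apply, Pi.add_apply, unitVec]
    rcases eq_or_ne t m with rfl | htm
    · rw [Equiv.swap_apply_right]
      simp [hxm]
    · rcases eq_or_ne t i with rfl | hti
      · rw [Equiv.swap_apply_left]
        have hmi' : m ≠ t := fun he => htm he.symm
        simp [htm, hmi', hxm]
      · rw [Equiv.swap_apply_of_ne_of_ne hti htm]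
        simp [hti, htm]
  -- uniqueness of sorting
  set f : Fin n → ℕᵒᵈ := fun t => OrderDual.toDual ((x + unitVec n i) t) with hf
  have h1 : Monotone (f ∘ σ) := by
    have := hx'.dual_right
    rw [h] at this
    exact this
  have h2 : Monotone (f ∘ Equiv.swap i m) := by
    have := hanti.dual_right
    rw [← hswap] at this
    exact this
  have key := Tuple.unique_monotone h1 h2
  refine ⟨m, hmi, hxm, hmin, ?_⟩
  funext t
  have ht := congrFun key t
  have ht2 := congrFun hswap t
  simp only [Function.comp_apply, hf] at ht ht2
  rw [h]
  simp only [Function.comp_apply]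
  calc (x + unitVec n i) (σ t) = (x + unitVec n i) (Equiv.swap i m t) :=
        OrderDual.toDual.injective ht
    _ = (x + unitVec n m) t := ht2

theorem stmt0 (n : ℕ) (x y : Fin n → ℕ)
    (hx : Antitone x) (hy : Antitone y)
    (hmaj : Majorizes n x y)
    (i j : Fin n) (hij : i ≤ j)
    (x' y' : Fin n → ℕ) (hx' : Antitone x') (hy' : Antitone y')
    (σ τ : Equiv.Perm (Fin n))
    (hxσ : x' = (x + unitVec n i) ∘ σ)
    (hyτ : y' = (y + unitVec n j) ∘ τ) :
    Majorizes n x' y' := by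
  obtain ⟨mx, hmxi, hxmx, hmxmin, hxe⟩ := sorted_shift n x hx i x' hx' σ hxσ
  obtain ⟨my, hmyj, hymy, hmymin, hye⟩ := sorted_shift n y hy j y' hy' τ hyτ
  have hmxi' : (mx : ℕ) ≤ i := hmxi
  have hmyj' : (my : ℕ) ≤ j := hmyj
  have hij' : (i : ℕ) ≤ j := hij
  have hin : (i : ℕ) < n := i.isLt
  have hjn : (j : ℕ) < n := j.isLt
  -- y is constant on [my, j]
  have hyc : ∀ t : Fin n, my ≤ t → t ≤ j → y t = y j := by
    intro t h1 h2
    exact le_antisymm (hymy ▸ hy h1) (hy h2)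
  have maj' : ∀ t, t ≤ n → prefixSum n y t ≤ prefixSum n x t := by
    intro t ht
    rcases eq_or_lt_of_le ht with rfl | hlt
    · exact le_of_eq (by rw [prefixSum_top, prefixSum_top, hmaj.1])
    · exact hmaj.2 t hlt
  constructor
  · rw [hxe, hye, sum_add_unit, sum_add_unit, hmaj.1]
  · intro k hk
    rw [hxe, hye, prefixSum_add_unit, prefixSum_add_unit]
    by_cases hmy : (my : ℕ) < k
    · by_cases hmx : (mx : ℕ) < k
      · have := hmaj.2 k hk
        simp only [if_pos hmx, if_pos hmy]
        omega
      · -- hard case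
        have hkmx : k ≤ (mx : ℕ) := not_lt.1 hmx
        have hk1n : k - 1 < n := by omega
        suffices hlt : prefixSum n y k < prefixSum n x k by
          simp only [if_neg hmx, if_pos hmy]; omega
        by_contra hcon
        push_neg at hcon
        have hE : prefixSum n x k = prefixSum n y k :=
          le_antisymm hcon (hmaj.2 k hk)
        -- x (k-1) ≤ y (k-1)
        have h2x := prefixSum_succ n x (k - 1) hk1n
        have h2y := prefixSum_succ n y (k - 1) hk1n
        rw [show k - 1 + 1 = k by omega] at h2x h2y
        have hmaj1 := maj' (k - 1) (by omega)
        have hxk1 : x ⟨k - 1, hk1n⟩ ≤ y ⟨k - 1, hk1n⟩ := by omega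
        have hyk1 : y ⟨k - 1, hk1n⟩ = y j :=
          hyc _ (show (my : ℕ) ≤ k - 1 by omega) (show (k : ℕ) - 1 ≤ (j : ℕ) by omega)
        have hxlt : x i < x ⟨k - 1, hk1n⟩ :=
          hmxmin _ (show (k : ℕ) - 1 < (mx : ℕ) by omega)
        -- inductive prefix comparison from k up to i
        have H : ∀ d, k + d ≤ (i : ℕ) → prefixSum n x (k + d) ≤ prefixSum n y (k + d) := by
          intro d
          induction d with
          | zero => intro _; exact hE.le
          | succ d ih =>
            intro hd
            have hdn : k + d < n := by omega
            have h3x := prefixSum_succ n x (k + d) hdn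
            have h3y := prefixSum_succ n y (k + d) hdn
            have hxle : x ⟨k + d, hdn⟩ ≤ x ⟨k - 1, hk1n⟩ :=
              hx (show (⟨k - 1, hk1n⟩ : Fin n) ≤ ⟨k + d, hdn⟩ from by
                simp [Fin.le_def]; omega)
            have hyeq : y ⟨k + d, hdn⟩ = y j :=
              hyc _ (show (my : ℕ) ≤ k + d by omega) (show k + d ≤ (j : ℕ) by omega)
            have ihd := ih (by omega)
            show prefixSum n x (k + d + 1) ≤ prefixSum n y (k + d + 1)
            omega
        have Hi := H ((i : ℕ) - k) (by omega)
        rw [show k + ((i : ℕ) - k) = (i : ℕ) by omega] at Hi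
        have h4x := prefixSum_succ n x i hin
        have h4y := prefixSum_succ n y i hin
        rw [Fin.eta] at h4x h4y
        have hyi : y i = y j := hyc i (show (my : ℕ) ≤ i by omega) hij
        have hfin := maj' ((i : ℕ) + 1) (by omega)
        omega
    · simp only [if_neg hmy]
      have := hmaj.2 k hk
      split_ifs <;> omega
end

section
/- Let n be prime and d < n. For a ball whose d bin choices are h_k = (f + k·g) mod n for k = 0,1,...,d−1, where f is uniform on {0,...,n−1}, g is uniform on {1,...,n−1}, and f, g are independent, the d choices h_0,...,h_d−1 are pairwise distinct, each h_k is uniformly distributed on {0,...,n−1}, and for any distinct bins b_1, b_2 and distinct indices i ≠ j, Pr(h_i = b_1 and h_j = b_2) = 1/(n(n−1)). -/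
theorem stmt1 (n d : ℕ) [Fact (Nat.Prime n)] (hd : d < n)
    (h : ℕ → ZMod n × {g : ZMod n // g ≠ 0} → ZMod n)
    (hdef : ∀ k ω, h k ω = ω.1 + (k : ZMod n) * ω.2.1) :
    -- the d choices are pairwise distinct
    (∀ ω, ∀ k, k < d → ∀ k', k' < d → k ≠ k' → h k ω ≠ h k' ω) ∧
    -- each h_k is uniform on the n bins
    (∀ k, k < d → ∀ b : ZMod n,
      (Nat.card {ω : ZMod n × {g : ZMod n // g ≠ 0} // h k ω = b} : ℚ) /
        Nat.card (ZMod n × {g : ZMod n // g ≠ 0}) = 1 / n) ∧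
    -- pairwise: Pr(h_i = b₁ and h_j = b₂) = 1/(n(n-1))
    (∀ b₁ b₂ : ZMod n, b₁ ≠ b₂ → ∀ k, k < d → ∀ k', k' < d → k ≠ k' →
      (Nat.card {ω : ZMod n × {g : ZMod n // g ≠ 0} //
          h k ω = b₁ ∧ h k' ω = b₂} : ℚ) /
        Nat.card (ZMod n × {g : ZMod n // g ≠ 0})
        = 1 / ((n : ℚ) * ((n : ℚ) - 1))) := by
  have hp : n.Prime := Fact.out
  haveI : NeZero n := ⟨hp.ne_zero⟩
  have h2 : 2 ≤ n := hp.two_le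
  -- cast injectivity on {0,...,d-1}
  have hcast : ∀ k k' : ℕ, k < d → k' < d → (k : ZMod n) = (k' : ZMod n) → k = k' := by
    intro k k' hk hk' he
    have he' := congrArg ZMod.val he
    rwa [ZMod.val_cast_of_lt (lt_trans hk hd), ZMod.val_cast_of_lt (lt_trans hk' hd)] at he'
  -- card of nonzero elements
  have hg : Nat.card {g : ZMod n // g ≠ 0} = n - 1 := by
    rw [Nat.card_eq_fintype_card]
    have : Fintype.card {g : ZMod n // g ≠ 0} = Fintype.card {g : ZMod n // ¬ g = 0} := rfl
    rw [this, Fintype.card_subtype_compl, Fintype.card_subtype_eq, ZMod.card]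
  have htot : Nat.card (ZMod n × {g : ZMod n // g ≠ 0}) = n * (n - 1) := by
    rw [Nat.card_prod, hg, Nat.card_zmod]
  have hnQ : (n : ℚ) ≠ 0 := by positivity
  have hn1Q : (n : ℚ) - 1 ≠ 0 := by
    have : (2 : ℚ) ≤ (n : ℚ) := by exact_mod_cast h2
    linarith
  refine ⟨?_, ?_, ?_⟩
  · -- pairwise distinct
    intro ω k hk k' hk' hkk' he
    rw [hdef, hdef] at he
    have : ((k : ZMod n) - k') * ω.2.1 = 0 := by ring_nf; linear_combination he
    rcases mul_eq_zero.mp this with h0 | h0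
    · exact hkk' (hcast k k' hk hk' (by linear_combination h0))
    · exact ω.2.2 h0
  · -- uniform
    intro k hk b
    have hc : Nat.card {ω : ZMod n × {g : ZMod n // g ≠ 0} // h k ω = b} = n - 1 := by
      rw [Nat.card_congr ?_, hg]
      exact {
        toFun := fun x => x.1.2
        invFun := fun g => ⟨(b - (k : ZMod n) * g.1, g), by rw [hdef]; ring⟩
        left_inv := by
          rintro ⟨⟨f, g⟩, hx⟩
          rw [hdef] at hx
          have hf : f = b - (k : ZMod n) * g.1 := by linear_combination hx
          subst hf
          rfl
        right_inv := fun g => rfl }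
    rw [hc, htot]
    rw [Nat.cast_mul, Nat.cast_sub (by omega), Nat.cast_one]
    rw [div_eq_div_iff (by positivity) hnQ]
    ring
  · -- pairwise probability
    intro b₁ b₂ hb k hk k' hk' hkk'
    set kk : ZMod n := (k' : ZMod n) - (k : ZMod n) with hkkdef
    have hkk0 : kk ≠ 0 := by
      intro h0
      exact hkk' (hcast k k' hk hk' (by linear_combination -h0))
    set g0 : ZMod n := (b₂ - b₁) / kk with hg0def
    have hg00 : g0 ≠ 0 := div_ne_zero (sub_ne_zero.mpr (Ne.symm hb)) hkk0
    have hkey : ∀ f : ZMod n, ∀ g : ZMod n, g ≠ 0 →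
        ((f + (k : ZMod n) * g = b₁ ∧ f + (k' : ZMod n) * g = b₂) ↔
          (g = g0 ∧ f = b₁ - (k : ZMod n) * g0)) := by
      intro f g hgne
      constructor
      · rintro ⟨e1, e2⟩
        have hge : g = g0 := by
          rw [hg0def, eq_div_iff hkk0, hkkdef]
          linear_combination e2 - e1
        exact ⟨hge, by rw [← hge]; linear_combination e1⟩
      · rintro ⟨hge, hfe⟩
        subst hge hfe
        constructor
        · ring
        · rw [hg0def]
          field_simp
          ring
    haveI : Unique {ω : ZMod n × {g : ZMod n // g ≠ 0} // h k ω = b₁ ∧ h k' ω = b₂} := by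
      refine ⟨⟨⟨(b₁ - (k : ZMod n) * g0, ⟨g0, hg00⟩), ?_⟩⟩, ?_⟩
      · rw [hdef, hdef]
        exact (hkey _ g0 hg00).mpr ⟨rfl, rfl⟩
      · rintro ⟨⟨f, g, hgne⟩, hx1, hx2⟩
        rw [hdef] at hx1 hx2
        obtain ⟨hge, hfe⟩ := (hkey f g hgne).mp ⟨hx1, hx2⟩
        subst hge
        subst hfe
        rfl
    rw [Nat.card_unique, htot]
    rw [Nat.cast_mul, Nat.cast_sub (by omega), Nat.cast_one]
end

section
/- Define β_6 = n/(2e) and β_i = 4·β_{i−1}^d / n^{d−1} for i > 6, where d ≥ 3 is an integer and n > 0 a real. Then for all i ≥ 6, β_i ≤ n / e^{d^{i−6}}. -/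
theorem stmt8 (d : ℕ) (hd : 3 ≤ d) (n : ℝ) (hn : 0 < n)
    (β : ℕ → ℝ)
    (hβ6 : β 6 = n / (2 * Real.exp 1))
    (hrec : ∀ i, 6 ≤ i → β (i + 1) = 4 * (β i) ^ d / n ^ (d - 1)) :
    ∀ i, 6 ≤ i → β i ≤ n / Real.exp 1 ^ (d ^ (i - 6)) := by
  have he : (0:ℝ) < Real.exp 1 := Real.exp_pos 1
  have key : ∀ i, 6 ≤ i → 0 ≤ β i ∧ β i ≤ n / (2 * Real.exp 1 ^ (d ^ (i - 6))) := by
    intro i hi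
    induction i, hi using Nat.le_induction with
    | base =>
      refine ⟨by rw [hβ6]; positivity, ?_⟩
      rw [hβ6]; simp
    | succ i hi ih =>
      obtain ⟨h0, hle⟩ := ih
      rw [hrec i hi]
      have hnpow : (0:ℝ) < n ^ (d - 1) := by positivity
      refine ⟨by positivity, ?_⟩
      set k := d ^ (i - 6) with hk
      have hE : (0:ℝ) < Real.exp 1 ^ k := by positivity
      have hidx : (i + 1 - 6) = (i - 6) + 1 := by omega
      rw [hidx, pow_succ, pow_mul]
      have h2 : 4 * β i ^ d / n ^ (d - 1)
          ≤ 4 * (n / (2 * Real.exp 1 ^ k)) ^ d / n ^ (d - 1) := by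
        gcongr
      refine h2.trans ?_
      have hd1 : d - 1 + 1 = d := by omega
      have e1 : 4 * (n / (2 * Real.exp 1 ^ k)) ^ d / n ^ (d - 1)
          = 4 * n / (2 ^ d * (Real.exp 1 ^ k) ^ d) := by
        rw [div_pow, mul_pow, ← hd1, pow_succ]
        field_simp
        ring_nf
        rw [Nat.add_sub_cancel_left]
      rw [e1, div_le_div_iff₀ (by positivity) (by positivity)]
      have h8 : (8:ℝ) ≤ 2 ^ d := by
        calc (8:ℝ) = 2 ^ 3 := by norm_num
        _ ≤ 2 ^ d := pow_le_pow_right₀ (by norm_num) hd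
      have hEd : (0:ℝ) < (Real.exp 1 ^ k) ^ d := by positivity
      nlinarith [mul_pos hn hEd]
  intro i hi
  refine (key i hi).2.trans ?_
  have hE : (0:ℝ) < Real.exp 1 ^ (d ^ (i - 6)) := by positivity
  gcongr
  linarith
end

section
/- Consider two coupled processes placing the same sequence of balls into n bins: process X places each ball in the less loaded of 2 bins, and process Y places each ball in the least loaded of d ≥ 2 bins, where under the coupling the two choices of X correspond (in sorted load order) to two of the d choices of Y. Then at every step, the sorted load vector of X majorizes the sorted load vector of Y; consequently, for every c, Pr(max load of X ≥ c) ≥ Pr(max load of Y ≥ c). -/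
open MeasureTheory

/-- `v` is the non-increasing rearrangement of `u` incremented at sorted position `a`. -/
def SortedIncr {n : ℕ} (u v : Fin n → ℕ) (a : Fin n) : Prop :=
  Antitone v ∧ ∃ σ : Equiv.Perm (Fin n),
    v = (fun k => u k + if k = a then 1 else 0) ∘ σ

lemma antitone_perm_eq {n : ℕ} {f g : Fin n → ℕ} (hf : Antitone f) (hg : Antitone g)
    (σ : Equiv.Perm (Fin n)) (h : f = g ∘ σ) : f = g := by
  haveI : IsAntisymm ℕ (fun a b : ℕ => b ≤ a) := ⟨fun a b h1 h2 => le_antisymm h2 h1⟩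
  have hl : List.ofFn f = List.ofFn g := by
    refine (fun hp h1 h2 => List.Perm.eq_of_sortedGE h1 h2 hp) ?_ ?_ ?_
    · rw [h]; exact σ.ofFn_comp_perm g
    · rw [List.sortedGE_ofFn_iff]; exact hf
    · rw [List.sortedGE_ofFn_iff]; exact hg
  exact List.ofFn_injective hl

lemma prefixSum_split (n : ℕ) (u : Fin n → ℕ) {k m : ℕ} (h : k ≤ m) :
    prefixSum n u m = prefixSum n u k +
      ∑ i ∈ Finset.univ.filter (fun i : Fin n => k ≤ (i:ℕ) ∧ (i:ℕ) < m), u i := by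
  unfold prefixSum
  rw [← Finset.sum_union (by rw [Finset.disjoint_left]; intro i hi hi2; simp at hi hi2; omega)]
  congr 1
  ext i
  simp only [Finset.mem_union, Finset.mem_filter, Finset.mem_univ, true_and]
  omega

lemma prefixSum_succ_s18 (n : ℕ) (u : Fin n → ℕ) {m : ℕ} (hm : m < n) :
    prefixSum n u (m + 1) = prefixSum n u m + u ⟨m, hm⟩ := by
  rw [prefixSum_split n u (Nat.le_succ m)]
  congr 1
  have : Finset.univ.filter (fun i : Fin n => m ≤ (i:ℕ) ∧ (i:ℕ) < m + 1) = {⟨m, hm⟩} := by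
    ext i
    simp only [Finset.mem_filter, Finset.mem_univ, true_and, Finset.mem_singleton, Fin.ext_iff]
    omega
  rw [this, Finset.sum_singleton]

lemma prefixSum_zero (n : ℕ) (u : Fin n → ℕ) : prefixSum n u 0 = 0 := by
  unfold prefixSum
  simp

lemma prefixSum_all (n : ℕ) (u : Fin n → ℕ) : prefixSum n u n = ∑ i, u i := by
  unfold prefixSum
  rw [Finset.filter_true_of_mem (fun i _ => i.isLt)]

lemma prefixSum_incr (n : ℕ) (u : Fin n → ℕ) (j : Fin n) (k : ℕ) :
    prefixSum n (fun i => u i + if i = j then 1 else 0) k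
      = prefixSum n u k + if (j : ℕ) < k then 1 else 0 := by
  unfold prefixSum
  rw [Finset.sum_add_distrib, Finset.sum_ite_eq' _ j (fun _ => 1)]
  simp

lemma sum_incr (n : ℕ) (u : Fin n → ℕ) (j : Fin n) :
    ∑ i, (u i + if i = j then 1 else 0) = (∑ i, u i) + 1 := by
  rw [Finset.sum_add_distrib, Finset.sum_ite_eq' _ j (fun _ => 1)]
  simp

lemma sortedIncr_eq {n : ℕ} {u v : Fin n → ℕ} {a : Fin n} (hu : Antitone u)
    (h : SortedIncr u v a) :
    ∃ j : Fin n, j ≤ a ∧ u j = u a ∧ (∀ i, i < j → u a < u i) ∧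
      v = fun k => u k + if k = j then 1 else 0 := by
  obtain ⟨hv, σ, hσ⟩ := h
  set s : Finset (Fin n) := Finset.univ.filter (fun i => u i = u a) with hs
  have hane : s.Nonempty := ⟨a, by simp [hs]⟩
  set j := s.min' hane with hj
  have hja : u j = u a := by
    have := s.min'_mem hane
    simpa [hs] using this
  have hjle : j ≤ a := s.min'_le a (by simp [hs])
  have hmin : ∀ i, i < j → u a < u i := by
    intro i hij
    have hne : u i ≠ u a := by
      intro he
      exact absurd (s.min'_le i (by simp [hs, he])) (not_le.mpr hij)
    have : u a ≤ u i := hja ▸ hu hij.le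
    exact lt_of_le_of_ne this (Ne.symm hne)
  refine ⟨j, hjle, hja, hmin, ?_⟩
  set w : Fin n → ℕ := fun k => u k + if k = j then 1 else 0 with hw
  have hwanti : Antitone w := by
    intro i i' hii'
    show u i' + (if i' = j then 1 else 0) ≤ u i + (if i = j then 1 else 0)
    by_cases h2 : i = j
    · rw [if_pos h2]
      by_cases h1 : i' = j
      · rw [if_pos h1, h1, h2]
      · rw [if_neg h1]
        have := hu hii'
        omega
    · rw [if_neg h2]
      by_cases h1 : i' = j
      · have hlt : i < j := lt_of_le_of_ne (h1 ▸ hii') h2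
        have h3 := hmin i hlt
        rw [if_pos h1, h1]
        omega
      · rw [if_neg h1]; exact add_le_add (hu hii') le_rfl
  have hwperm : w = (fun k => u k + if k = a then 1 else 0) ∘ (Equiv.swap a j) := by
    funext k
    show u k + (if k = j then 1 else 0)
      = u (Equiv.swap a j k) + (if Equiv.swap a j k = a then 1 else 0)
    by_cases h1 : k = j
    · rw [h1, Equiv.swap_apply_right, if_pos rfl, if_pos rfl, hja]
    · by_cases h2 : k = a
      · have haj : a ≠ j := fun he => h1 (h2.trans he)
        rw [h2, Equiv.swap_apply_left, if_neg haj, if_neg (fun he : j = a => haj he.symm), hja]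
      · rw [Equiv.swap_apply_of_ne_of_ne h2 h1, if_neg h1, if_neg h2]
  have hvw : v = w ∘ (σ.trans (Equiv.swap a j)) := by
    funext k
    rw [hσ, hwperm]
    simp only [Function.comp, Equiv.trans_apply, Equiv.swap_apply_self]
  exact antitone_perm_eq hv hwanti _ hvw

lemma maj_first {n : ℕ} {x y : Fin n → ℕ} (h : Majorizes n x y) (hn : 0 < n) :
    prefixSum n y 1 ≤ prefixSum n x 1 := by
  rcases Nat.lt_or_ge 1 n with hlt | hge
  · exact h.2 1 hlt
  · have hne : n = 1 := by omega
    subst hne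
    rw [prefixSum_all, prefixSum_all]
    exact le_of_eq h.1.symm

lemma maj_step {n : ℕ} {x y x' y' : Fin n → ℕ} {a b : Fin n}
    (hx : Antitone x) (hy : Antitone y) (hM : Majorizes n x y) (hab : a ≤ b)
    (hX : SortedIncr x x' a) (hY : SortedIncr y y' b) : Majorizes n x' y' := by
  obtain ⟨jx, hjxa, hjxe, hjxmin, hx'⟩ := sortedIncr_eq hx hX
  obtain ⟨jy, hjyb, hjye, hjymin, hy'⟩ := sortedIncr_eq hy hY
  rw [hx', hy']
  constructor
  · rw [sum_incr, sum_incr, hM.1]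
  · intro k hk
    rw [prefixSum_incr, prefixSum_incr]
    have base := hM.2 k hk
    by_cases hcase : (jx : ℕ) ≤ (jy : ℕ)
    · split_ifs <;> omega
    · push_neg at hcase
      by_cases h2 : (jx : ℕ) < k
      · split_ifs <;> omega
      · by_cases h1 : (jy : ℕ) < k
        · -- hard case : jy < k ≤ jx
          rw [if_pos h1, if_neg h2]
          push_neg at h2
          by_contra hc
          push_neg at hc
          have heq : prefixSum n x k = prefixSum n y k := by omega
          -- setup
          have hk1 : k - 1 < n := by omega
          set k1 : Fin n := ⟨k - 1, hk1⟩ with hk1d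
          have hkk : k - 1 + 1 = k := by omega
          have hfx : prefixSum n x k = prefixSum n x (k-1) + x k1 := by
            rw [← hkk] ; exact prefixSum_succ_s18 n x hk1
          have hfy : prefixSum n y k = prefixSum n y (k-1) + y k1 := by
            rw [← hkk] ; exact prefixSum_succ_s18 n y hk1
          have base1 := hM.2 (k-1) (by omega)
          have hxy1 : x k1 ≤ y k1 := by omega
          have hjxan : (jx : ℕ) ≤ (a : ℕ) := hjxa
          have habn : (a : ℕ) ≤ (b : ℕ) := hab
          have hjybn : (jy : ℕ) ≤ (b : ℕ) := hjyb
          -- y is constant equal to y b on [k-1, b]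
          have hyconst : ∀ i : Fin n, k - 1 ≤ (i:ℕ) → (i:ℕ) ≤ (b:ℕ) → y i = y b := by
            intro i hi1 hi2
            have hji : jy ≤ i := by rw [Fin.le_def]; omega
            have hib : i ≤ b := by rw [Fin.le_def]; exact hi2
            have := hy hji
            have := hy hib
            omega
          have hyk1 : y k1 = y b := hyconst k1 le_rfl (by show k - 1 ≤ (b:ℕ); omega)
          -- x a < x k1
          have hxak1 : x a < x k1 := by
            have hlt : k1 < jx := by rw [Fin.lt_def]; show k - 1 < (jx:ℕ); omega
            exact hjxmin k1 hlt
          -- strict sum inequality on [k, b+1)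
          have hslt : (∑ i ∈ Finset.univ.filter
                (fun i : Fin n => k ≤ (i:ℕ) ∧ (i:ℕ) < (b:ℕ) + 1), x i)
              < ∑ i ∈ Finset.univ.filter
                (fun i : Fin n => k ≤ (i:ℕ) ∧ (i:ℕ) < (b:ℕ) + 1), y i := by
            apply Finset.sum_lt_sum
            · intro i hi
              simp only [Finset.mem_filter, Finset.mem_univ, true_and] at hi
              have hik1 : k1 ≤ i := by rw [Fin.le_def]; show k - 1 ≤ (i:ℕ); omega
              have h5 : x i ≤ x k1 := hx hik1
              have h6 : y i = y b := hyconst i (by omega) (by omega)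
              omega
            · refine ⟨a, ?_, ?_⟩
              · simp only [Finset.mem_filter, Finset.mem_univ, true_and]
                omega
              · have h6 : y a = y b := hyconst a (by omega) (by omega)
                omega
          have hbk : k ≤ (b:ℕ) + 1 := by omega
          have hsx := prefixSum_split n x hbk
          have hsy := prefixSum_split n y hbk
          have hMb : prefixSum n y ((b:ℕ)+1) ≤ prefixSum n x ((b:ℕ)+1) := by
            have hbn : (b:ℕ) + 1 ≤ n := b.isLt
            rcases Nat.lt_or_ge ((b:ℕ)+1) n with hlt | hge
            · exact hM.2 _ hlt
            · have he : (b:ℕ) + 1 = n := le_antisymm hbn hge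
              rw [he, prefixSum_all, prefixSum_all, hM.1]
          omega
        · rw [if_neg h1, if_neg h2]
          exact base

theorem stmt18 {Ω : Type*} [MeasurableSpace Ω] (μ : Measure Ω) [IsProbabilityMeasure μ]
    (n : ℕ) (d : ℕ) (hd : 2 ≤ d)
    (X Y : Ω → ℕ → Fin n → ℕ)
    (hinit : ∀ ω, X ω 0 = Y ω 0)
    (hsortX : ∀ ω t, Antitone (X ω t))
    (hsortY : ∀ ω t, Antitone (Y ω t))
    -- the coupling: X places its ball at sorted position a, and Y places its
    -- ball at a sorted position b ≥ a (the least loaded of its d choices)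
    (hstep : ∀ ω t, ∃ a b : Fin n, a ≤ b ∧
      SortedIncr (X ω t) (X ω (t + 1)) a ∧ SortedIncr (Y ω t) (Y ω (t + 1)) b) :
    (∀ ω t, Majorizes n (X ω t) (Y ω t)) ∧
    (∀ t (c : ℕ), μ {ω | ∃ i, c ≤ Y ω t i} ≤ μ {ω | ∃ i, c ≤ X ω t i}) := by
  have hMaj : ∀ ω t, Majorizes n (X ω t) (Y ω t) := by
    intro ω t
    induction t with
    | zero => rw [hinit ω]; exact ⟨rfl, fun k _ => le_rfl⟩
    | succ t ih =>
      obtain ⟨a, b, hab, hX, hY⟩ := hstep ω t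
      exact maj_step (hsortX ω t) (hsortY ω t) ih hab hX hY
  refine ⟨hMaj, fun t c => measure_mono ?_⟩
  intro ω hω
  obtain ⟨i, hi⟩ := hω
  have hn : 0 < n := i.pos
  set z : Fin n := ⟨0, hn⟩ with hz
  have hzi : z ≤ i := by rw [Fin.le_def]; exact Nat.zero_le _
  have h1 : c ≤ Y ω t z := le_trans hi (hsortY ω t hzi)
  have hY1 : prefixSum n (Y ω t) 1 = Y ω t z := by
    rw [show (1:ℕ) = 0 + 1 from rfl, prefixSum_succ_s18 n _ hn, prefixSum_zero]
    exact Nat.zero_add _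
  have hX1 : prefixSum n (X ω t) 1 = X ω t z := by
    rw [show (1:ℕ) = 0 + 1 from rfl, prefixSum_succ_s18 n _ hn, prefixSum_zero]
    exact Nat.zero_add _
  have h3 : prefixSum n (Y ω t) 1 ≤ prefixSum n (X ω t) 1 :=
    maj_first (hMaj ω t) hn
  exact ⟨z, by omega⟩
end
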